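/- Let τ ∈ S_d be non-monotone with |τ| − |x(τ)| = 2. Then the open interval (x(τ), τ) in the consecutive pattern poset contains exactly two elements. -/

import Mathlib

/-- Standardization of a list of distinct naturals: replace each entry by its rank
(the number of entries less than or equal to it). -/
def stdize (s : List ℕ) : List ℕ := s.map (fun x => (s.filter (· ≤ x)).length)

/-- All contiguous subwords (infixes) of a list. -/
def infixes (l : List ℕ) : List (List ℕ) := l.inits.flatMap List.tails

/-- `l` is a permutation of `{1,…,d}` where `d = l.length ≥ 1`; these are the
elements of the consecutive pattern poset. -/
def IsPermList (l : List ℕ) : Prop := l ≠ [] ∧ l.Perm (List.range' 1 l.length)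

/-- Consecutive pattern containment: `σ ≤ τ` iff `σ` is the standardization of
some contiguous subsequence of `τ`. -/
def PattLE (σ τ : List ℕ) : Prop := σ ∈ (infixes τ).map stdize

instance (σ τ : List ℕ) : Decidable (PattLE σ τ) :=
  inferInstanceAs (Decidable (σ ∈ (infixes τ).map stdize))

/-- A permutation is monotone if its letters strictly increase or strictly decrease. -/
def MonotoneList (l : List ℕ) : Prop := l.Chain' (· < ·) ∨ l.Chain' (· > ·)

/-- The interior `i(τ)`: standardization of `τ` with first and last letters removed. -/
def pattInterior (τ : List ℕ) : List ℕ := stdize τ.tail.dropLast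

/-- Length of the longest proper prefix of `τ` whose standardization is also the
standardization of a suffix of `τ`. -/
def extLen (τ : List ℕ) : ℕ :=
  Nat.findGreatest (fun k => stdize (τ.take k) = stdize (τ.drop (τ.length - k))) (τ.length - 1)

/-- The exterior `x(τ)`: the longest permutation that is both a proper prefix and a
suffix of `τ`. -/
def pattExterior (τ : List ℕ) : List ℕ := stdize (τ.take (extLen τ))

/-- The closed interval `[σ,τ]` in the consecutive pattern poset, as a `Finset`. -/
def pattInterval (σ τ : List ℕ) : Finset (List ℕ) :=
  ((infixes τ).map stdize).toFinset.filter (fun z => PattLE σ z)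

/-- The open interval `(σ,τ)` in the consecutive pattern poset, as a `Finset`. -/
def openPattInterval (σ τ : List ℕ) : Finset (List ℕ) :=
  ((infixes τ).map stdize).toFinset.filter (fun z => PattLE σ z ∧ z ≠ σ ∧ z ≠ τ)

/-- `τ` covers `σ` in the consecutive pattern poset: `σ < τ` and no element lies
strictly between them. -/
def CoveredBy (σ τ : List ℕ) : Prop :=
  PattLE σ τ ∧ σ ≠ τ ∧ ¬ ∃ ρ, IsPermList ρ ∧ PattLE σ ρ ∧ PattLE ρ τ ∧ ρ ≠ σ ∧ ρ ≠ τ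

/-- `c` is a maximal chain of the interval `[σ,τ]`: it starts at `τ`, ends at `σ`,
and each element covers the next. -/
def IsMaxChainPatt (σ τ : List ℕ) (c : List (List ℕ)) : Prop :=
  c.head? = some τ ∧ c.getLast? = some σ ∧ c.Chain' (fun a b => CoveredBy b a)

/-!
Every pattern below `τ` is the standardization of an infix `w` of `τ`, and it lies above
`x(τ)` only if `|x(τ)| ≤ |w|`. When `|τ| = |x(τ)| + 2` the infixes of the two extreme lengths
standardize to `x(τ)` and `τ` themselves, so the open interval consists of the patterns of
`τ` minus its last letter and `τ` minus its first letter. Both contain `x(τ)`, which is a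
prefix and a suffix of `τ`, and they are distinct, for otherwise they would be a border of
`τ` longer than `x(τ)`.
-/

def rank (w : List ℕ) (x : ℕ) : ℕ := (w.filter (· ≤ x)).length

lemma stdize_eq_map_rank (w : List ℕ) : stdize w = w.map (rank w) := rfl

lemma length_stdize (w : List ℕ) : (stdize w).length = w.length := List.length_map _

lemma rank_lt_rank {w : List ℕ} {x a : ℕ} (ha : a ∈ w) (hxa : x < a) :
    rank w x < rank w a := by
  have hsub : (w.filter (· ≤ x)).Sublist (w.filter (· ≤ a)) :=
    List.monotone_filter_right w fun b hb => by simp only [decide_eq_true_eq] at hb ⊢; omega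
  refine hsub.length_le.lt_of_ne fun hlen => ?_
  have ha' : a ∈ w.filter (· ≤ x) :=
    hsub.eq_of_length hlen ▸ List.mem_filter.mpr ⟨ha, by simp⟩
  simp only [List.mem_filter, decide_eq_true_eq] at ha'
  omega

lemma rank_le_rank_iff {w : List ℕ} {a x : ℕ} (ha : a ∈ w) (hx : x ∈ w) :
    rank w a ≤ rank w x ↔ a ≤ x := by
  refine ⟨fun h => not_lt.mp fun hlt => (rank_lt_rank ha hlt).not_ge h, fun h => ?_⟩
  rcases h.eq_or_lt with rfl | hlt
  · exact le_rfl
  · exact (rank_lt_rank hx hlt).le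

lemma stdize_map_of_le_iff {u : List ℕ} {f : ℕ → ℕ}
    (hf : ∀ a ∈ u, ∀ x ∈ u, f a ≤ f x ↔ a ≤ x) : stdize (u.map f) = stdize u := by
  simp only [stdize, List.map_map, List.filter_map, List.length_map]
  refine List.map_congr_left fun x hx => congrArg List.length (List.filter_congr fun a ha => ?_)
  simp only [Function.comp_apply, decide_eq_decide]
  exact hf a ha x hx

lemma stdize_stdize (w : List ℕ) : stdize (stdize w) = stdize w :=
  stdize_map_of_le_iff fun _ ha _ hx => rank_le_rank_iff ha hx

lemma rank_range' {n x : ℕ} (hx : x ≤ n) : rank (List.range' 1 n) x = x := by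
  have hsplit : List.range' 1 n = List.range' 1 x ++ List.range' (1 + x) (n - x) := by
    rw [List.range'_append_1, Nat.add_sub_cancel' hx]
  rw [rank, hsplit, List.filter_append, List.filter_eq_self.mpr, List.filter_eq_nil_iff.mpr]
  · simp
  all_goals
    intro a ha
    rw [List.mem_range'_1] at ha
    simp only [decide_eq_true_eq]
    omega

lemma stdize_eq_self {l : List ℕ} (hl : l.Perm (List.range' 1 l.length)) : stdize l = l := by
  conv_rhs => rw [← List.map_id l]
  refine List.map_congr_left fun x hx => ?_
  have hx' := List.mem_range'_1.mp (hl.subset hx)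
  change rank l x = x
  rw [rank, ← List.countP_eq_length_filter, hl.countP_eq, List.countP_eq_length_filter]
  exact rank_range' (by omega)

lemma mem_infixes {w l : List ℕ} : w ∈ infixes l ↔ w <:+: l := by
  simp only [infixes, List.mem_flatMap, List.mem_inits, List.mem_tails]
  constructor
  · rintro ⟨p, hp, hw⟩
    exact hw.isInfix.trans hp.isInfix
  · rintro ⟨s, t, rfl⟩
    exact ⟨s ++ w, ⟨t, by simp⟩, ⟨s, rfl⟩⟩

lemma infixes_map (f : ℕ → ℕ) (l : List ℕ) :
    infixes (l.map f) = (infixes l).map (List.map f) := by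
  simp only [infixes, List.map_inits, List.flatMap_map, List.map_flatMap]
  exact List.flatMap_congr fun _ _ => List.map_tails f

lemma List.IsInfix.pattLE {u w : List ℕ} (h : u <:+: w) : PattLE (stdize u) w :=
  List.mem_map_of_mem (mem_infixes.mpr h)

lemma pattLE_iff {σ τ : List ℕ} : PattLE σ τ ↔ ∃ u, u <:+: τ ∧ stdize u = σ := by
  simp only [PattLE, List.mem_map, mem_infixes]

lemma pattLE_stdize_iff {σ w : List ℕ} : PattLE σ (stdize w) ↔ PattLE σ w := by
  suffices h : (infixes (stdize w)).map stdize = (infixes w).map stdize by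
    rw [PattLE, PattLE, h]
  rw [stdize_eq_map_rank, infixes_map, List.map_map]
  refine List.map_congr_left fun u hu => ?_
  have husub : u ⊆ w := (mem_infixes.mp hu).subset
  exact stdize_map_of_le_iff fun a ha x hx => rank_le_rank_iff (husub ha) (husub hx)

lemma PattLE.length_le {σ τ : List ℕ} (h : PattLE σ τ) : σ.length ≤ τ.length := by
  obtain ⟨u, hu, rfl⟩ := pattLE_iff.mp h
  exact (length_stdize u).trans_le hu.length_le

lemma PattLE.eq_stdize_of_length_le {σ τ : List ℕ} (h : PattLE σ τ)
    (hlen : τ.length ≤ σ.length) : σ = stdize τ := by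
  obtain ⟨u, hu, rfl⟩ := pattLE_iff.mp h
  rw [hu.eq_of_length (le_antisymm hu.length_le (by rwa [length_stdize] at hlen))]

lemma List.IsInfix.eq_dropLast_or_eq_tail {w l : List ℕ} (h : w <:+: l)
    (hlen : w.length + 1 = l.length) : w = l.dropLast ∨ w = l.tail := by
  obtain ⟨s, t, rfl⟩ := h
  match s, t, hlen with
  | [], [_], _ => left; simp
  | [_], [], _ => right; simp
  | [], [], _ | _ :: _ :: _, _, _ | _ :: _, _ :: _, _ | [], _ :: _ :: _, _ =>
    (simp at *) <;> omega

theorem openPattInterval_eq_pair {σ τ : List ℕ} (hτ : τ.Perm (List.range' 1 τ.length))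
    (hlen : σ.length + 2 = τ.length) (hpre : PattLE σ τ.dropLast) (hsuf : PattLE σ τ.tail) :
    openPattInterval σ τ = {stdize τ.dropLast, stdize τ.tail} := by
  ext z
  simp only [openPattInterval, Finset.mem_filter, List.mem_toFinset, Finset.mem_insert,
    Finset.mem_singleton]
  constructor
  · rintro ⟨hz, hσz, hzσ, hzτ⟩
    obtain ⟨w, hw, rfl⟩ := pattLE_iff.mp hz
    rw [pattLE_stdize_iff] at hσz
    have hσw := hσz.length_le
    rcases (show w.length = σ.length ∨ w.length + 1 = τ.length ∨ w.length = τ.length by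
        have := hw.length_le; omega) with hl | hl | hl
    · exact absurd (hσz.eq_stdize_of_length_le hl.le).symm hzσ
    · exact (hw.eq_dropLast_or_eq_tail hl).imp (congrArg stdize) (congrArg stdize)
    · exact absurd (by rw [hw.eq_of_length hl, stdize_eq_self hτ]) hzτ
  · have hne {v : List ℕ} (hv : v.length + 1 = τ.length) :
        stdize v ≠ σ ∧ stdize v ≠ τ := by
      constructor <;> intro h <;> have := congrArg List.length h <;>
        rw [length_stdize] at this <;> omega
    rintro (rfl | rfl)
    · exact ⟨(List.dropLast_prefix τ).isInfix.pattLE, pattLE_stdize_iff.mpr hpre,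
        hne (by simp; omega)⟩
    · exact ⟨(List.tail_suffix τ).isInfix.pattLE, pattLE_stdize_iff.mpr hsuf,
        hne (by simp; omega)⟩

lemma extLen_le (τ : List ℕ) : extLen τ ≤ τ.length - 1 := Nat.findGreatest_le _

lemma length_pattExterior (τ : List ℕ) : (pattExterior τ).length = extLen τ := by
  have := extLen_le τ
  rw [pattExterior, length_stdize, List.length_take]
  omega

lemma pattExterior_eq_stdize_drop (τ : List ℕ) :
    pattExterior τ = stdize (τ.drop (τ.length - extLen τ)) :=
  Nat.findGreatest_spec (P := fun k => stdize (τ.take k) = stdize (τ.drop (τ.length - k)))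
    (Nat.zero_le _) (by simp [stdize])

lemma stdize_take_ne_stdize_drop_of_extLen_lt {τ : List ℕ} {k : ℕ} (hk : extLen τ < k)
    (hkτ : k ≤ τ.length - 1) : stdize (τ.take k) ≠ stdize (τ.drop (τ.length - k)) :=
  fun h => hk.not_ge (Nat.le_findGreatest hkτ h)

theorem open_interval_exterior_card_two_general (τ : List ℕ) (hτ : IsPermList τ)
    (h2 : τ.length = (pattExterior τ).length + 2) :
    (openPattInterval (pattExterior τ) τ).card = 2 := by
  rw [length_pattExterior] at h2
  have hpre : PattLE (pattExterior τ) τ.dropLast := by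
    rw [pattExterior, List.dropLast_eq_take]
    exact (List.take_prefix_take_left (by omega)).isInfix.pattLE
  have hsuf : PattLE (pattExterior τ) τ.tail := by
    rw [pattExterior_eq_stdize_drop, show τ.length - extLen τ = 1 + 1 by omega,
      ← List.drop_drop, List.drop_one (l := τ)]
    exact (List.drop_suffix 1 τ.tail).isInfix.pattLE
  have hne : stdize τ.dropLast ≠ stdize τ.tail := by
    have := stdize_take_ne_stdize_drop_of_extLen_lt (τ := τ) (k := τ.length - 1) (by omega)
      le_rfl
    rwa [show τ.length - (τ.length - 1) = 1 by omega, List.drop_one, ← List.dropLast_eq_take]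
      at this
  rw [openPattInterval_eq_pair hτ.2 (by rw [length_pattExterior]; omega) hpre hsuf]
  exact Finset.card_pair hne

/-- For a non-monotone `τ` with `|τ| − |x(τ)| = 2`, the open interval `(x(τ), τ)`
contains exactly two elements. -/
theorem open_interval_exterior_card_two (τ : List ℕ) (hτ : IsPermList τ)
    (hm : ¬ MonotoneList τ) (h2 : τ.length = (pattExterior τ).length + 2) :
    (openPattInterval (pattExterior τ) τ).card = 2 :=
  open_interval_exterior_card_two_general τ hτ h2
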